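/- Let G₁, G₂, G₃ be closed subspaces of a real Hilbert space G. Let G₁₂ (respectively G₂₃) be the closed subspace generated by G₁ and G₂ (respectively by G₂ and G₃). Suppose G₁ and G₂₃ are quasi-orthogonal with closed span G, and G₁₂ and G₃ are quasi-orthogonal with closed span G. Then G₁, G₂, G₃ are mutually quasi-orthogonal, i.e. there exists A ∈ S(G) with ⟨Ax, Ay⟩ = 0 whenever x ∈ Gᵢ, y ∈ Gⱼ and i ≠ j (and G is the closed span of G₁ ∪ G₂ ∪ G₃). -/

import Mathlib

open ContinuousLinearMap
open scoped InnerProductSpace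

noncomputable section

universe u v w

/-- A bounded operator `T` between real inner product spaces is *Hilbert–Schmidt* if
`∑ᵢ ‖T eᵢ‖²` is finite for some orthonormal (Hilbert) basis `(eᵢ)`. -/
def IsHilbertSchmidt {E : Type u} {F : Type v} [NormedAddCommGroup E] [InnerProductSpace ℝ E]
    [NormedAddCommGroup F] [InnerProductSpace ℝ F] (T : E →L[ℝ] F) : Prop :=
  ∃ (ι : Type u) (b : HilbertBasis ι ℝ E), Summable fun i => ‖T (b i)‖ ^ 2

/-- A bounded operator is invertible with a bounded inverse. -/
def IsBoundedlyInvertible {E : Type u} {F : Type v} [NormedAddCommGroup E]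
    [InnerProductSpace ℝ E] [NormedAddCommGroup F] [InnerProductSpace ℝ F]
    (T : E →L[ℝ] F) : Prop :=
  ∃ S : F →L[ℝ] E, S.comp T = ContinuousLinearMap.id ℝ E ∧
    T.comp S = ContinuousLinearMap.id ℝ F

/-- `A ∈ S(G₁,G₂)`: `A` is invertible with bounded inverse and `1 - (A*A)^{1/2}` is
Hilbert–Schmidt (`(A*A)^{1/2}` being the positive square root of `A*A`). -/
def MemS {G₁ : Type u} {G₂ : Type v}
    [NormedAddCommGroup G₁] [InnerProductSpace ℝ G₁] [CompleteSpace G₁]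
    [NormedAddCommGroup G₂] [InnerProductSpace ℝ G₂] [CompleteSpace G₂]
    (A : G₁ →L[ℝ] G₂) : Prop :=
  IsBoundedlyInvertible A ∧
    ∃ S : G₁ →L[ℝ] G₁, S.IsPositive ∧
      S.comp S = (ContinuousLinearMap.adjoint A).comp A ∧
      IsHilbertSchmidt (ContinuousLinearMap.id ℝ G₁ - S)

/-- `A ∈ S(G)`: `A` is a positive, invertible operator on `G` such that `1 - A` is
Hilbert–Schmidt. -/
def MemSG {G : Type u} [NormedAddCommGroup G] [InnerProductSpace ℝ G] [CompleteSpace G]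
    (A : G →L[ℝ] G) : Prop :=
  A.IsPositive ∧ IsBoundedlyInvertible A ∧
    IsHilbertSchmidt (ContinuousLinearMap.id ℝ G - A)

/-- A family of subspaces of a real Hilbert space is mutually quasi-orthogonal if some
`A ∈ S(G)` maps them to mutually orthogonal subspaces. -/
def MutuallyQuasiOrthogonal {G : Type u} [NormedAddCommGroup G] [InnerProductSpace ℝ G]
    [CompleteSpace G] {ι : Type w} (V : ι → Submodule ℝ G) : Prop :=
  ∃ A : G →L[ℝ] G, MemSG A ∧
    ∀ i j, i ≠ j → ∀ x ∈ V i, ∀ y ∈ V j, ⟪A x, A y⟫_ℝ = 0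


/-!
Let `A, B ∈ S(G)` witness `V₁ ⟂ W := closure (V₂ + V₃)` and `closure (V₁ + V₂) ⟂ V₃`. With `P`
the orthogonal projection onto `(A W)ᗮ`, the operator `Q = A⁻¹ P A` vanishes on `W` and fixes
`V₁`, so the inner product `⟪A Q x, A Q y⟫ + ⟪B (1 - Q) x, B (1 - Q) y⟫` makes `V₁ ⟂ W`
(through `Q`) and `V₂ ⟂ V₃` (through `B`). It equals `⟪R x, y⟫` for a coercive self-adjoint `R`,
hence `⟪S x, S y⟫` for the positive square root `S` of `R`. Modulo Hilbert–Schmidt operators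
`A ≡ B ≡ 1`, so `Q ≡ P`, `R ≡ P² + (1 - P)² = 1` and `S ≡ 1`: thus `S ∈ S(G)`.
-/

open scoped ENNReal

theorem HilbertBasis.enorm_sq_eq_tsum {E ι : Type*} [NormedAddCommGroup E]
    [InnerProductSpace ℝ E] (b : HilbertBasis ι ℝ E) (x : E) :
    ‖x‖ₑ ^ 2 = ∑' i, ‖⟪x, b i⟫_ℝ‖ₑ ^ 2 := by
  have h : HasSum (fun i => ⟪x, b i⟫_ℝ ^ 2) (‖x‖ ^ 2) := by
    simpa [← sq, real_inner_comm x, real_inner_self_eq_norm_sq] using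
      b.hasSum_inner_mul_inner x x
  simp_rw [← ofReal_norm, ← ENNReal.ofReal_pow (norm_nonneg _), Real.norm_eq_abs, sq_abs]
  rw [← ENNReal.ofReal_tsum_of_nonneg (fun _ => sq_nonneg _) h.summable, h.tsum_eq]

theorem summable_norm_sq_iff_tsum_enorm_sq_ne_top {E ι : Type*} [NormedAddCommGroup E]
    (f : ι → E) : (Summable fun i => ‖f i‖ ^ 2) ↔ ∑' i, ‖f i‖ₑ ^ 2 ≠ ∞ := by
  simp only [enorm_eq_nnnorm, ← ENNReal.coe_pow, ENNReal.tsum_coe_ne_top_iff_summable,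
    ← NNReal.summable_coe, NNReal.coe_pow, coe_nnnorm]

namespace TwoSidedIdeal

variable {R : Type*} [Ring R] (I : TwoSidedIdeal R) {a b : R}

theorem mk'_eq_mk'_iff : I.ringCon.mk' a = I.ringCon.mk' b ↔ a - b ∈ I :=
  (RingCon.eq _).trans (I.rel_iff a b)

theorem mk'_eq_one (h : 1 - a ∈ I) : I.ringCon.mk' a = 1 :=
  map_one I.ringCon.mk' ▸ ((I.mk'_eq_mk'_iff).2 h).symm

theorem mk'_eq_one_of_mul_eq_one (h : 1 - a ∈ I) (hba : b * a = 1) : I.ringCon.mk' b = 1 :=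
  calc I.ringCon.mk' b = I.ringCon.mk' b * I.ringCon.mk' a := by rw [I.mk'_eq_one h, mul_one]
    _ = 1 := by rw [← map_mul, hba, map_one]

end TwoSidedIdeal

/-- The square root of `1 - X` as `1 - Y`, with `Y` the fixed point of the contraction
`Y ↦ (X + Y²) / 2` on the self-adjoint elements of the ball of radius `r`. -/
theorem exists_isSelfAdjoint_one_sub_mul_self_eq {𝔄 : Type*} [NormedRing 𝔄] [NormedAlgebra ℝ 𝔄]
    [CompleteSpace 𝔄] [StarRing 𝔄] [ContinuousStar 𝔄] [StarModule ℝ 𝔄] {X : 𝔄}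
    (hX : IsSelfAdjoint X) {r : ℝ} (hr : r < 1) (hXr : ‖X‖ ≤ r) :
    ∃ Y, IsSelfAdjoint Y ∧ ‖Y‖ ≤ r ∧ (1 - Y) * (1 - Y) = 1 - X := by
  set s : Set 𝔄 := {Y | IsSelfAdjoint Y ∧ ‖Y‖ ≤ r}
  set f : 𝔄 → 𝔄 := fun Y => (2 : ℝ)⁻¹ • (X + Y * Y)
  have hr0 : 0 ≤ r := (norm_nonneg X).trans hXr
  have hs : IsComplete s :=
    ((isClosed_eq continuous_star continuous_id).inter
      (isClosed_le continuous_norm continuous_const)).isComplete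
  have hfs : Set.MapsTo f s s := fun Y ⟨hY, hYr⟩ => by
    refine ⟨.smul (.all _) (hX.add (by simpa only [sq] using hY.pow 2)), ?_⟩
    calc ‖f Y‖ = 2⁻¹ * ‖X + Y * Y‖ := by simp only [f, norm_smul, norm_inv, Real.norm_two]
      _ ≤ 2⁻¹ * (r + r * r) := by
        gcongr
        exact (norm_add_le _ _).trans (add_le_add hXr ((norm_mul_le _ _).trans (by gcongr)))
      _ ≤ r := by nlinarith
  have hf : ContractingWith r.toNNReal (hfs.restrict f s s) := by
    refine ⟨by simpa using hr, hfs.lipschitzOnWith_iff_restrict.1 ?_⟩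
    refine LipschitzOnWith.of_dist_le_mul fun Y ⟨_, hY⟩ Z ⟨_, hZ⟩ => ?_
    have : f Y - f Z = (2 : ℝ)⁻¹ • (Y * (Y - Z) + (Y - Z) * Z) := by
      simp only [f, ← smul_sub]; noncomm_ring
    rw [dist_eq_norm, dist_eq_norm, this, norm_smul, Real.coe_toNNReal _ hr0]
    calc ‖(2 : ℝ)⁻¹‖ * ‖Y * (Y - Z) + (Y - Z) * Z‖ ≤ 2⁻¹ * (r * ‖Y - Z‖ + ‖Y - Z‖ * r) := by
          rw [norm_inv, Real.norm_two]
          gcongr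
          exact (norm_add_le _ _).trans (add_le_add ((norm_mul_le _ _).trans (by gcongr))
            ((norm_mul_le _ _).trans (by gcongr)))
      _ = r * ‖Y - Z‖ := by ring
  obtain ⟨Y, ⟨hY, hYr⟩, hfY, -⟩ := hf.exists_fixedPoint' hs hfs ⟨.zero _, by simpa using hr0⟩
    (edist_ne_top _ _)
  refine ⟨Y, hY, hYr, ?_⟩
  have : X + Y * Y = (2 : ℝ) • Y := by
    simpa [f, smul_smul] using congrArg ((2 : ℝ) • ·) hfY
  calc (1 - Y) * (1 - Y) = 1 - (2 : ℝ) • Y + Y * Y := by rw [two_smul]; noncomm_ring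
    _ = 1 - X := by rw [← this]; abel

section

variable {E : Type*} [NormedAddCommGroup E] [InnerProductSpace ℝ E] {S T : E →L[ℝ] E}

theorem ContinuousLinearMap.inner_apply_self_le (T : E →L[ℝ] E) (x : E) :
    ⟪T x, x⟫_ℝ ≤ ‖T‖ * ‖x‖ ^ 2 := calc
  ⟪T x, x⟫_ℝ ≤ ‖T x‖ * ‖x‖ := real_inner_le_norm _ _
  _ ≤ ‖T‖ * ‖x‖ * ‖x‖ := by gcongr; exact T.le_opNorm x
  _ = ‖T‖ * ‖x‖ ^ 2 := by ring

theorem IsUnit.exists_norm_le_mul_norm_apply (hT : IsUnit T) : ∃ C, ∀ x, ‖x‖ ≤ C * ‖T x‖ :=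
  ⟨‖(↑hT.unit⁻¹ : E →L[ℝ] E)‖, fun x => by
    simpa [← mul_apply_eq_comp] using (↑hT.unit⁻¹ : E →L[ℝ] E).le_opNorm (T x)⟩

theorem isBoundedlyInvertible_iff_isUnit : IsBoundedlyInvertible T ↔ IsUnit T :=
  (isUnit_iff_exists.trans <| exists_congr fun _ => and_comm).symm

namespace IsHilbertSchmidt

theorem neg (hT : IsHilbertSchmidt T) : IsHilbertSchmidt (-T) := by
  obtain ⟨ι, b, hb⟩ := hT
  exact ⟨ι, b, by simpa using hb⟩

theorem mul_left (S : E →L[ℝ] E) (hT : IsHilbertSchmidt T) : IsHilbertSchmidt (S * T) := by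
  obtain ⟨ι, b, hb⟩ := hT
  refine ⟨ι, b, .of_nonneg_of_le (fun _ => by positivity) (fun i => ?_) (hb.mul_left (‖S‖ ^ 2))⟩
  rw [← mul_pow]
  gcongr
  exact S.le_opNorm _

variable [CompleteSpace E]

/-- Both sums equal `∑ i, ∑ j, ⟪T (b i), c j⟫²`. -/
theorem summable_iff_summable_adjoint (T : E →L[ℝ] E) {ι κ : Type*} (b : HilbertBasis ι ℝ E)
    (c : HilbertBasis κ ℝ E) :
    (Summable fun i => ‖T (b i)‖ ^ 2) ↔ Summable fun j => ‖adjoint T (c j)‖ ^ 2 := by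
  have : ∑' i, ‖T (b i)‖ₑ ^ 2 = ∑' j, ‖adjoint T (c j)‖ₑ ^ 2 := calc
    _ = ∑' i, ∑' j, ‖⟪T (b i), c j⟫_ℝ‖ₑ ^ 2 := tsum_congr fun i => c.enorm_sq_eq_tsum _
    _ = ∑' j, ∑' i, ‖⟪adjoint T (c j), b i⟫_ℝ‖ₑ ^ 2 := by
      rw [ENNReal.tsum_comm]
      simp_rw [adjoint_inner_left, real_inner_comm (c _)]
    _ = _ := tsum_congr fun j => (b.enorm_sq_eq_tsum _).symm
  simp only [summable_norm_sq_iff_tsum_enorm_sq_ne_top, this]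

theorem _root_.isHilbertSchmidt_iff {ι : Type*} (b : HilbertBasis ι ℝ E) :
    IsHilbertSchmidt T ↔ Summable fun i => ‖T (b i)‖ ^ 2 := by
  refine ⟨fun ⟨_, c, hc⟩ => ?_, fun h => ?_⟩
  · rwa [summable_iff_summable_adjoint T b c, ← summable_iff_summable_adjoint T c c]
  · obtain ⟨ι', c, -⟩ := exists_hilbertBasis ℝ E
    exact ⟨ι', c, by rwa [summable_iff_summable_adjoint T c b,
      ← summable_iff_summable_adjoint T b b]⟩

theorem adjoint (hT : IsHilbertSchmidt T) : IsHilbertSchmidt (adjoint T) := by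
  obtain ⟨ι, b, hb⟩ := hT
  exact ⟨ι, b, (summable_iff_summable_adjoint T b b).1 hb⟩

theorem zero : IsHilbertSchmidt (0 : E →L[ℝ] E) := by
  obtain ⟨ι, b, -⟩ := exists_hilbertBasis ℝ E
  exact ⟨ι, b, by simp⟩

theorem add (hS : IsHilbertSchmidt S) (hT : IsHilbertSchmidt T) : IsHilbertSchmidt (S + T) := by
  obtain ⟨ι, b, hb⟩ := hS
  refine ⟨ι, b, .of_nonneg_of_le (fun _ => by positivity) (fun i => ?_)
    ((hb.add ((isHilbertSchmidt_iff b).1 hT)).mul_left 2)⟩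
  calc ‖(S + T) (b i)‖ ^ 2 ≤ (‖S (b i)‖ + ‖T (b i)‖) ^ 2 := by
        gcongr; exact norm_add_le _ _
    _ ≤ 2 * (‖S (b i)‖ ^ 2 + ‖T (b i)‖ ^ 2) := add_sq_le

theorem mul_right (hS : IsHilbertSchmidt S) (T : E →L[ℝ] E) : IsHilbertSchmidt (S * T) := by
  simpa [mul_def, adjoint_comp] using (hS.adjoint.mul_left (ContinuousLinearMap.adjoint T)).adjoint

end IsHilbertSchmidt

variable [CompleteSpace E]

variable (E) in
def hilbertSchmidtIdeal : TwoSidedIdeal (E →L[ℝ] E) :=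
  .mk' {T | IsHilbertSchmidt T} .zero .add .neg (fun hT => hT.mul_left _) (fun hS => hS.mul_right _)

theorem mem_hilbertSchmidtIdeal : T ∈ hilbertSchmidtIdeal E ↔ IsHilbertSchmidt T :=
  TwoSidedIdeal.mem_mk' ..

theorem star_sub_star_mem_hilbertSchmidtIdeal (h : S - T ∈ hilbertSchmidtIdeal E) :
    star S - star T ∈ hilbertSchmidtIdeal E := by
  rw [mem_hilbertSchmidtIdeal, ← star_sub, star_eq_adjoint] at *
  exact h.adjoint

theorem memSG_iff : MemSG T ↔ T.IsPositive ∧ IsUnit T ∧ 1 - T ∈ hilbertSchmidtIdeal E := by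
  rw [MemSG, isBoundedlyInvertible_iff_isUnit, mem_hilbertSchmidtIdeal, one_def]

theorem isUnit_of_forall_le_inner {c : ℝ} (hc : 0 < c) (h : ∀ x, c * ‖x‖ ^ 2 ≤ ⟪T x, x⟫_ℝ) :
    IsUnit T := by
  have hB : IsCoercive ((innerSL ℝ).comp T) := ⟨c, hc, fun x => by simpa [sq, mul_assoc] using h x⟩
  have : (hB.continuousLinearEquivOfBilin : E →L[ℝ] E) = T :=
    ext fun v => ext_inner_right ℝ fun w => by simp
  exact this ▸ ⟨(ContinuousLinearEquiv.unitsEquiv ℝ E).symm hB.continuousLinearEquivOfBilin, rfl⟩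

theorem IsSelfAdjoint.norm_le_of_forall_abs_inner_le (hT : IsSelfAdjoint T) {r : ℝ} (hr : 0 ≤ r)
    (h : ∀ x, |⟪T x, x⟫_ℝ| ≤ r * ‖x‖ ^ 2) : ‖T‖ ≤ r := by
  rw [norm_eq_iSup_rayleighQuotient T hT.isSymmetric]
  refine ciSup_le fun x => ?_
  rcases eq_or_ne x 0 with rfl | hx
  · simpa using hr
  · have : 0 < ‖x‖ ^ 2 := by have := norm_pos_iff.2 hx; positivity
    rw [rayleighQuotient, reApplyInnerSelf_apply, abs_div, abs_of_pos this, div_le_iff₀ this]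
    exact h x

/-- `X = 1 - T / k` has norm at most `‖T‖ / k < 1`, and `√k • (1 - Y)` with `(1 - Y)² = 1 - X` is
the square root. -/
theorem exists_isPositive_mul_self_eq {T : E →L[ℝ] E} (hT : IsSelfAdjoint T) {c : ℝ} (hc : 0 < c)
    (h : ∀ x, c * ‖x‖ ^ 2 ≤ ⟪T x, x⟫_ℝ) : ∃ S : E →L[ℝ] E, S.IsPositive ∧ S * S = T := by
  set k := ‖T‖ + c
  have hk : 0 < k := by positivity
  set X : E →L[ℝ] E := 1 - k⁻¹ • T
  have hX : IsSelfAdjoint X := .sub (.one _) (.smul (.all _) hT)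
  have hXr : ‖X‖ ≤ ‖T‖ / k := by
    refine hX.norm_le_of_forall_abs_inner_le (by positivity) fun x => ?_
    have : ⟪X x, x⟫_ℝ = (k * ‖x‖ ^ 2 - ⟪T x, x⟫_ℝ) / k := by
      simp only [X, sub_apply, one_apply_eq_self, smul_apply, inner_sub_left, real_inner_smul_left,
        real_inner_self_eq_norm_sq]
      field_simp
    rw [this, abs_div, abs_of_pos hk, div_mul_eq_mul_div, div_le_div_iff_of_pos_right hk, abs_le]
    constructor <;> nlinarith [h x, T.inner_apply_self_le x]
  obtain ⟨Y, hY, hYr, hYX⟩ :=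
    exists_isSelfAdjoint_one_sub_mul_self_eq hX (by rw [div_lt_one hk]; linarith) hXr
  refine ⟨√k • (1 - Y), (isPositive_iff' _).2 ⟨.smul (.all _) (.sub (.one _) hY), fun x => ?_⟩, ?_⟩
  · have hYx : ⟪Y x, x⟫_ℝ ≤ ‖x‖ ^ 2 := by
      have : ‖Y‖ ≤ 1 := hYr.trans (by rw [div_le_one hk]; linarith)
      nlinarith [Y.inner_apply_self_le x, sq_nonneg ‖x‖]
    rw [smul_apply, real_inner_smul_left, sub_apply, one_apply_eq_self, inner_sub_left,
      real_inner_self_eq_norm_sq]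
    exact mul_nonneg (Real.sqrt_nonneg _) (sub_nonneg.2 hYx)
  · rw [smul_mul_smul, Real.mul_self_sqrt hk.le, hYX, sub_sub_cancel, smul_smul,
      mul_inv_cancel₀ hk.ne', one_smul]

theorem exists_memSG_mul_self_eq {R : E →L[ℝ] E} (hR : IsSelfAdjoint R) {c : ℝ} (hc : 0 < c)
    (h : ∀ x, c * ‖x‖ ^ 2 ≤ ⟪R x, x⟫_ℝ) (hRI : 1 - R ∈ hilbertSchmidtIdeal E) :
    ∃ S, MemSG S ∧ S * S = R := by
  obtain ⟨S, hS, rfl⟩ := exists_isPositive_mul_self_eq hR hc h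
  have hS₁ : IsUnit (1 + S) := isUnit_of_forall_le_inner one_pos fun x => by
    rw [add_apply, one_apply_eq_self, inner_add_left, real_inner_self_eq_norm_sq, one_mul]
    linarith [hS.inner_nonneg_left x]
  have hSI : 1 - S = (1 - S * S) * ↑hS₁.unit⁻¹ := calc
    1 - S = (1 - S) * (1 + S) * ↑hS₁.unit⁻¹ := by rw [mul_assoc, hS₁.mul_val_inv, mul_one]
    _ = (1 - S * S) * ↑hS₁.unit⁻¹ := by noncomm_ring
  refine ⟨S, memSG_iff.2 ⟨hS, ?_, hSI ▸ TwoSidedIdeal.mul_mem_right _ _ _ hRI⟩, rfl⟩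
  exact ((Commute.refl S).isUnit_mul_iff.1 (isUnit_of_forall_le_inner hc h)).1

theorem inner_star_mul_self_apply (U : E →L[ℝ] E) (x y : E) :
    ⟪(star U * U) x, y⟫_ℝ = ⟪U x, U y⟫_ℝ := by
  rw [mul_apply_eq_comp, star_eq_adjoint, adjoint_inner_left]

theorem exists_forall_le_inner_star_mul_self_add {U V : E →L[ℝ] E} {a b : ℝ}
    (h : ∀ x, ‖x‖ ≤ a * ‖U x‖ + b * ‖V x‖) :
    ∃ c > 0, ∀ x, c * ‖x‖ ^ 2 ≤ ⟪(star U * U + star V * V) x, x⟫_ℝ := by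
  refine ⟨(2 * (a ^ 2 + b ^ 2) + 1)⁻¹, by positivity, fun x => ?_⟩
  rw [add_apply, inner_add_left, inner_star_mul_self_apply, inner_star_mul_self_apply,
    real_inner_self_eq_norm_sq, real_inner_self_eq_norm_sq, inv_mul_le_iff₀ (by positivity)]
  have := mul_self_le_mul_self (norm_nonneg x) (h x)
  nlinarith [sq_nonneg (a * ‖V x‖ - b * ‖U x‖), sq_nonneg (a * ‖U x‖ - b * ‖V x‖),
    sq_nonneg ‖U x‖, sq_nonneg ‖V x‖]

/-- `Q = A⁻¹ P A`, with `P` the orthogonal projection onto `(A W)ᗮ`, is the projection along `W`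
that is orthogonal for `⟪A ·, A ·⟫`. -/
theorem exists_quasiOrthogonalProjection {A : E →L[ℝ] E} (hA : IsUnit A)
    (hAI : 1 - A ∈ hilbertSchmidtIdeal E) (W : Submodule ℝ E) :
    ∃ Q P : E →L[ℝ] E, IsStarProjection P ∧ Q - P ∈ hilbertSchmidtIdeal E ∧
      (∀ w ∈ W, Q w = 0) ∧ ∀ x, (∀ w ∈ W, ⟪A x, A w⟫_ℝ = 0) → Q x = x := by
  set K := (W.map (A : E →ₗ[ℝ] E))ᗮ
  refine ⟨↑hA.unit⁻¹ * K.starProjection * A, K.starProjection, isStarProjection_starProjection,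
    ?_, fun w hw => ?_, fun x hx => ?_⟩
  · rw [← TwoSidedIdeal.mk'_eq_mk'_iff, map_mul, map_mul,
      TwoSidedIdeal.mk'_eq_one_of_mul_eq_one _ hAI hA.val_inv_mul, TwoSidedIdeal.mk'_eq_one _ hAI,
      one_mul, mul_one]
  · have : A w ∈ Kᗮ := Submodule.le_orthogonal_orthogonal _ (Submodule.mem_map_of_mem hw)
    rw [mul_apply_eq_comp, mul_apply_eq_comp,
      K.starProjection_apply_eq_zero_iff.2 this, map_zero]
  · have : A x ∈ K := by
      rintro _ ⟨w, hw, rfl⟩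
      rw [real_inner_comm]
      exact hx w hw
    rw [mul_apply_eq_comp, mul_apply_eq_comp,
      K.starProjection_eq_self_iff.2 this, ← mul_apply_eq_comp, hA.val_inv_mul,
      one_apply_eq_self]

theorem exists_memSG_inner_eq {A B Q P : E →L[ℝ] E} (hA : MemSG A) (hB : MemSG B)
    (hP : IsStarProjection P) (hQP : Q - P ∈ hilbertSchmidtIdeal E) :
    ∃ S, MemSG S ∧
      ∀ x y, ⟪S x, S y⟫_ℝ = ⟪A (Q x), A (Q y)⟫_ℝ + ⟪B ((1 - Q) x), B ((1 - Q) y)⟫_ℝ := by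
  obtain ⟨hApos, hAunit, hAI⟩ := memSG_iff.1 hA
  obtain ⟨hBpos, hBunit, hBI⟩ := memSG_iff.1 hB
  set R := star (A * Q) * (A * Q) + star (B * (1 - Q)) * (B * (1 - Q))
  have hRinner : ∀ x y, ⟪R x, y⟫_ℝ = ⟪A (Q x), A (Q y)⟫_ℝ + ⟪B ((1 - Q) x), B ((1 - Q) y)⟫_ℝ :=
    fun x y => by
      rw [add_apply, inner_add_left, inner_star_mul_self_apply, inner_star_mul_self_apply]; rfl
  obtain ⟨a, ha⟩ := hAunit.exists_norm_le_mul_norm_apply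
  obtain ⟨b, hb⟩ := hBunit.exists_norm_le_mul_norm_apply
  obtain ⟨c, hc, hcR⟩ := exists_forall_le_inner_star_mul_self_add (U := A * Q)
    (V := B * (1 - Q)) fun x => calc
      ‖x‖ ≤ ‖Q x‖ + ‖(1 - Q) x‖ := by
        simpa [sub_apply] using norm_add_le (Q x) ((1 - Q) x)
      _ ≤ a * ‖A (Q x)‖ + b * ‖B ((1 - Q) x)‖ := add_le_add (ha _) (hb _)
  have hQ := (TwoSidedIdeal.mk'_eq_mk'_iff _).2 hQP
  have hQ' := (TwoSidedIdeal.mk'_eq_mk'_iff _).2 (star_sub_star_mem_hilbertSchmidtIdeal hQP)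
  have hPP := congrArg (hilbertSchmidtIdeal E).ringCon.mk' hP.isIdempotentElem.eq
  rw [hP.isSelfAdjoint.star_eq] at hQ'
  rw [map_mul] at hPP
  -- modulo Hilbert–Schmidt operators `R ≡ P * P + (1 - P) * (1 - P) = 1`
  have hRI : 1 - R ∈ hilbertSchmidtIdeal E := by
    rw [← TwoSidedIdeal.mk'_eq_mk'_iff, map_one]
    simp only [R, star_mul, star_sub, star_one, hApos.isSelfAdjoint.star_eq,
      hBpos.isSelfAdjoint.star_eq, map_add, map_mul, map_sub, map_one,
      TwoSidedIdeal.mk'_eq_one _ hAI, TwoSidedIdeal.mk'_eq_one _ hBI, one_mul, mul_one, hQ, hQ']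
    generalize (hilbertSchmidtIdeal E).ringCon.mk' P = p at hPP ⊢
    calc 1 = 1 + 2 • (p * p - p) := by rw [hPP, sub_self, smul_zero, add_zero]
      _ = p * p + (1 - p) * (1 - p) := by noncomm_ring
  obtain ⟨S, hS, hSR⟩ := exists_memSG_mul_self_eq (R := R)
    ((IsSelfAdjoint.star_mul_self _).add (.star_mul_self _)) hc hcR hRI
  refine ⟨S, hS, fun x y => ?_⟩
  rw [← hRinner, ← hSR, mul_apply_eq_comp]
  exact (hS.1.inner_left_eq_inner_right _ _).symm

end

theorem Submodule.topologicalClosure_sup_eq_top {R M : Type*} [Semiring R] [AddCommMonoid M]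
    [Module R M] [TopologicalSpace M] [ContinuousAdd M] [ContinuousConstSMul R M]
    {p q : Submodule R M} (h : (p.topologicalClosure ⊔ q).topologicalClosure = ⊤) :
    (p ⊔ q).topologicalClosure = ⊤ :=
  top_le_iff.1 <| h ▸ topologicalClosure_minimal _
    (sup_le (topologicalClosure_mono le_sup_left) (le_sup_right.trans (le_topologicalClosure _)))
    (isClosed_topologicalClosure _)

theorem mutuallyQuasiOrthogonal_of_memSG {G : Type*} [NormedAddCommGroup G] [InnerProductSpace ℝ G]
    [CompleteSpace G] {V₁ V₂ V₃ : Submodule ℝ G} {S : G →L[ℝ] G} (hS : MemSG S)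
    (h₁₂ : ∀ x ∈ V₁, ∀ y ∈ V₂, ⟪S x, S y⟫_ℝ = 0) (h₁₃ : ∀ x ∈ V₁, ∀ y ∈ V₃, ⟪S x, S y⟫_ℝ = 0)
    (h₂₃ : ∀ x ∈ V₂, ∀ y ∈ V₃, ⟪S x, S y⟫_ℝ = 0) : MutuallyQuasiOrthogonal ![V₁, V₂, V₃] := by
  have hlt : ∀ i j : Fin 3, i < j → ∀ x ∈ ![V₁, V₂, V₃] i, ∀ y ∈ ![V₁, V₂, V₃] j,
      ⟪S x, S y⟫_ℝ = 0 := by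
    intro i j hij x hx y hy
    fin_cases i <;> fin_cases j <;> simp at hij hx hy
    exacts [h₁₂ x hx y hy, h₁₃ x hx y hy, h₂₃ x hx y hy]
  refine ⟨S, hS, fun i j hij x hx y hy => ?_⟩
  rcases hij.lt_or_gt with h | h
  exacts [hlt i j h x hx y hy, real_inner_comm (S x) (S y) ▸ hlt j i h y hy x hx]

theorem quasiOrthogonal_of_pairwise_general {G : Type u}
    [NormedAddCommGroup G] [InnerProductSpace ℝ G] [CompleteSpace G]
    (V₁ V₂ V₃ : Submodule ℝ G)
    (ha : ∃ A : G →L[ℝ] G, MemSG A ∧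
      ∀ x ∈ V₁, ∀ y ∈ (V₂ ⊔ V₃).topologicalClosure, ⟪A x, A y⟫_ℝ = 0)
    (hb : ∃ A : G →L[ℝ] G, MemSG A ∧
      ∀ x ∈ (V₁ ⊔ V₂).topologicalClosure, ∀ y ∈ V₃, ⟪A x, A y⟫_ℝ = 0)
    (hb' : ((V₁ ⊔ V₂).topologicalClosure ⊔ V₃).topologicalClosure = ⊤) :
    MutuallyQuasiOrthogonal ![V₁, V₂, V₃] ∧
      (V₁ ⊔ V₂ ⊔ V₃).topologicalClosure = ⊤ := by
  obtain ⟨A, hA, hAorth⟩ := ha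
  obtain ⟨B, hB, hBorth⟩ := hb
  obtain ⟨-, hAunit, hAI⟩ := memSG_iff.1 hA
  set W := (V₂ ⊔ V₃).topologicalClosure
  obtain ⟨Q, P, hP, hQP, hQW, hQV₁⟩ := exists_quasiOrthogonalProjection hAunit hAI W
  obtain ⟨S, hS, hSinner⟩ := exists_memSG_inner_eq hA hB hP hQP
  have hW : ∀ w ∈ W, Q w = 0 ∧ (1 - Q) w = w := fun w hw => by simp [sub_apply, hQW w hw]
  have hV₁ : ∀ x ∈ V₁, (1 - Q) x = 0 := fun x hx => by simp [sub_apply, hQV₁ x (hAorth x hx)]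
  have h₁W : ∀ x ∈ V₁, ∀ w ∈ W, ⟪S x, S w⟫_ℝ = 0 := fun x hx w hw => by
    simp [hSinner, (hW w hw).1, hV₁ x hx]
  have hV₂ : V₂ ≤ W := le_sup_left.trans (Submodule.le_topologicalClosure _)
  have hV₃ : V₃ ≤ W := le_sup_right.trans (Submodule.le_topologicalClosure _)
  refine ⟨mutuallyQuasiOrthogonal_of_memSG hS (fun x hx y hy => h₁W x hx y (hV₂ hy))
    (fun x hx y hy => h₁W x hx y (hV₃ hy)) fun x hx y hy => ?_,
    Submodule.topologicalClosure_sup_eq_top hb'⟩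
  rw [hSinner, (hW x (hV₂ hx)).1, (hW y (hV₃ hy)).1, (hW x (hV₂ hx)).2, (hW y (hV₃ hy)).2,
    map_zero, inner_zero_left, zero_add]
  exact hBorth x (Submodule.le_topologicalClosure _ (Submodule.mem_sup_right hx)) y hy

theorem quasiOrthogonal_of_pairwise {G : Type u}
    [NormedAddCommGroup G] [InnerProductSpace ℝ G] [CompleteSpace G]
    (V₁ V₂ V₃ : Submodule ℝ G)
    (h₁ : IsClosed (V₁ : Set G)) (h₂ : IsClosed (V₂ : Set G))
    (h₃ : IsClosed (V₃ : Set G))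
    (ha : ∃ A : G →L[ℝ] G, MemSG A ∧
      ∀ x ∈ V₁, ∀ y ∈ (V₂ ⊔ V₃).topologicalClosure, ⟪A x, A y⟫_ℝ = 0)
    (ha' : (V₁ ⊔ (V₂ ⊔ V₃).topologicalClosure).topologicalClosure = ⊤)
    (hb : ∃ A : G →L[ℝ] G, MemSG A ∧
      ∀ x ∈ (V₁ ⊔ V₂).topologicalClosure, ∀ y ∈ V₃, ⟪A x, A y⟫_ℝ = 0)
    (hb' : ((V₁ ⊔ V₂).topologicalClosure ⊔ V₃).topologicalClosure = ⊤) :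
    MutuallyQuasiOrthogonal ![V₁, V₂, V₃] ∧
      (V₁ ⊔ V₂ ⊔ V₃).topologicalClosure = ⊤ :=
  quasiOrthogonal_of_pairwise_general V₁ V₂ V₃ ha hb hb'
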